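/- Let ⟨C_{α,i} : α ∈ acc(μ), i(α) ≤ i < λ⟩ be a □^{ind}(μ,λ)-sequence with c(α,β) the least i such that i(β) ≤ i and α ∈ acc(C_{β,i}). Suppose i < λ, Λ ⊆ i, X ⊆ acc(μ) has size μ, X is well-connected in Λ, and α ∈ acc(C_{β,i}) for all α < β in X. Then D = ⋃_{α ∈ X} C_{α,i} is a club in μ satisfying D ∩ α = C_{α,i} for all α ∈ acc(D), contradicting clause (6) of the definition of □^{ind}(μ,λ). -/

import Mathlib

open Cardinal Set

noncomputable section

/-- The color of the unordered pair `{a,b}` under `c`. -/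
def pairColor (c : Ordinal → Ordinal → Ordinal) (a b : Ordinal) : Ordinal :=
  c (min a b) (max a b)

/-- `X` is well-connected in the set of colors `Λ` with respect to `c`, with the
connecting paths allowed to use any vertices from `Dom`. -/
def WellConnectedIn (Dom : Set Ordinal) (c : Ordinal → Ordinal → Ordinal)
    (Λ : Set Ordinal) (X : Set Ordinal) : Prop :=
  ∀ α ∈ X, ∀ β ∈ X, α < β →
    ∃ (n : ℕ) (f : ℕ → Ordinal), f 0 = α ∧ f n = β ∧
      (∀ k ≤ n, α ≤ f k ∧ f k ∈ Dom) ∧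
      (∀ k < n, f k ≠ f (k + 1) ∧ pairColor c (f k) (f (k + 1)) ∈ Λ)

/-- The set of accumulation points of a set of ordinals. -/
def accPts (C : Set Ordinal) : Set Ordinal :=
  {β | (C ∩ Set.Iio β).Nonempty ∧ sSup (C ∩ Set.Iio β) = β}

/-- `C` is club in `α`. -/
def IsClubIn (C : Set Ordinal) (α : Ordinal) : Prop :=
  C ⊆ Set.Iio α ∧ (∀ β < α, ∃ γ ∈ C, β ≤ γ) ∧ accPts C ∩ Set.Iio α ⊆ C

/-- A `□^{ind}(μ, λ)`-sequence `⟨C α i : α ∈ acc(μ), i(α) ≤ i < λ⟩`. -/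
def IsIndexedSquareSeq (μ lam : Cardinal.{0}) (iidx : Ordinal → Ordinal)
    (C : Ordinal → Ordinal → Set Ordinal) : Prop :=
  -- (1) indices below λ
  (∀ α, α < μ.ord → Order.IsSuccLimit α → iidx α < lam.ord) ∧
  -- (2) clubs
  (∀ α, α < μ.ord → Order.IsSuccLimit α → ∀ i, iidx α ≤ i → i < lam.ord → IsClubIn (C α i) α) ∧
  -- (3) monotonicity
  (∀ α, α < μ.ord → Order.IsSuccLimit α → ∀ i j, iidx α ≤ i → i ≤ j → j < lam.ord →
    C α i ⊆ C α j) ∧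
  -- (4) coherence
  (∀ α β, α < β → β < μ.ord → Order.IsSuccLimit α → Order.IsSuccLimit β →
    ∀ i, iidx β ≤ i → i < lam.ord → α ∈ accPts (C β i) →
      iidx α ≤ i ∧ C α i = C β i ∩ Set.Iio α) ∧
  -- (5) every pair is connected at some index
  (∀ α β, α < β → β < μ.ord → Order.IsSuccLimit α → Order.IsSuccLimit β →
    ∃ i, iidx β ≤ i ∧ i < lam.ord ∧ α ∈ accPts (C β i)) ∧
  -- (6) nontriviality: no club in μ coheres with the sequence at any fixed index
  (∀ D : Set Ordinal, IsClubIn D μ.ord → ∀ i, i < lam.ord →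
    ∃ α ∈ accPts D, α < μ.ord ∧ D ∩ Set.Iio α ≠ C α i)

/-- `c (α, β)` is the least `i` with `i(β) ≤ i` and `α ∈ acc(C β i)`. -/
def IsLeastIndexColoring (μ : Cardinal.{0}) (iidx : Ordinal → Ordinal)
    (C : Ordinal → Ordinal → Set Ordinal) (c : Ordinal → Ordinal → Ordinal) : Prop :=
  ∀ α β, α < β → β < μ.ord → Order.IsSuccLimit α → Order.IsSuccLimit β →
    (iidx β ≤ c α β ∧ α ∈ accPts (C β (c α β)) ∧
      ∀ j, iidx β ≤ j → α ∈ accPts (C β j) → c α β ≤ j)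
/-!
An edge of colour `j < i` between two points of `acc(μ)` forces both endpoints to have
index `i(·) ≤ j`, by minimality of the colour and coherence. Since `X` is infinite and
well-connected in `Λ ⊆ i`, every point of `X` is the endpoint of such an edge, so all
`C α i` (`α ∈ X`) are defined, and by the hypothesis on `X` and coherence they end-extend
one another. `X` is cofinal in `μ`, so the union `D` is club in `μ` and agrees below each
`β < μ` with some `C α i`, `α ∈ X`; coherence at an accumulation point `β` of `D` then
gives `D ∩ β = C β i`.
-/

lemma isSuccLimit_of_mem_accPts {S : Set Ordinal} {β : Ordinal} (h : β ∈ accPts S) :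
    Order.IsSuccLimit β := by
  obtain ⟨hne, hsup⟩ := h
  rcases Ordinal.zero_or_succ_or_isSuccLimit β with rfl | ⟨γ, rfl⟩ | hl
  · obtain ⟨x, -, hx⟩ := hne
    exact absurd hx (not_lt_zero (a := x))
  · have : sSup (S ∩ Iio (Order.succ γ)) ≤ γ :=
      csSup_le hne fun y hy => Order.lt_succ_iff.mp hy.2
    rw [hsup] at this
    exact absurd (Order.lt_succ γ) this.not_gt
  · exact hl

lemma accPts_mono {S T : Set Ordinal} (h : S ⊆ T) : accPts S ⊆ accPts T := by
  rintro β ⟨hne, hsup⟩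
  have hsub : S ∩ Iio β ⊆ T ∩ Iio β := inter_subset_inter_left _ h
  refine ⟨hne.mono hsub, le_antisymm (csSup_le (hne.mono hsub) fun y hy => hy.2.le) ?_⟩
  calc β = sSup (S ∩ Iio β) := hsup.symm
    _ ≤ sSup (T ∩ Iio β) := csSup_le_csSup ⟨β, fun y hy => hy.2.le⟩ hne hsub

lemma mem_accPts_of_inter_Iio_eq {S T : Set Ordinal} {β : Ordinal}
    (h : S ∩ Iio β = T ∩ Iio β) (hβ : β ∈ accPts S) : β ∈ accPts T := by
  obtain ⟨hne, hsup⟩ := hβ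
  exact ⟨h ▸ hne, h ▸ hsup⟩

lemma pairColor_comm (c : Ordinal → Ordinal → Ordinal) (a b : Ordinal) :
    pairColor c a b = pairColor c b a := by
  rw [pairColor, pairColor, min_comm, max_comm]

lemma pairColor_of_lt {c : Ordinal → Ordinal → Ordinal} {a b : Ordinal} (h : a < b) :
    pairColor c a b = c a b := by
  rw [pairColor, min_eq_left h.le, max_eq_right h.le]

lemma WellConnectedIn.exists_edge {Dom : Set Ordinal} {c : Ordinal → Ordinal → Ordinal}
    {Λ X : Set Ordinal} (hwc : WellConnectedIn Dom c Λ X) {α β : Ordinal} (hα : α ∈ X)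
    (hβ : β ∈ X) (hne : α ≠ β) : ∃ γ ∈ Dom, γ ≠ β ∧ pairColor c γ β ∈ Λ := by
  rcases hne.lt_or_gt with hlt | hgt
  · obtain ⟨n, f, hf0, hfn, hdom, hedge⟩ := hwc α hα β hβ hlt
    obtain ⟨m, rfl⟩ : ∃ m, n = m + 1 :=
      Nat.exists_eq_succ_of_ne_zero (by rintro rfl; exact hlt.ne (hf0 ▸ hfn))
    rw [← hfn]
    exact ⟨f m, (hdom m m.le_succ).2, hedge m m.lt_succ_self⟩
  · obtain ⟨n, f, hf0, hfn, hdom, hedge⟩ := hwc β hβ α hα hgt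
    have hn : 0 < n := Nat.pos_of_ne_zero (by rintro rfl; exact hgt.ne (hf0 ▸ hfn))
    obtain ⟨hne', hcol⟩ := hedge 0 hn
    rw [hf0] at hne' hcol
    exact ⟨f 1, (hdom 1 hn).2, hne'.symm, pairColor_comm c β (f 1) ▸ hcol⟩

lemma exists_gt_of_mk_eq {μ : Cardinal.{0}} (hμ : ℵ₀ ≤ μ) {X : Set Ordinal.{0}}
    (hX : #X = Cardinal.lift.{1} μ) {β : Ordinal} (hβ : β < μ.ord) : ∃ α ∈ X, β < α := by
  by_contra! hbdd
  have hle : #X ≤ #(Iio (β + 1)) :=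
    Cardinal.mk_le_mk_of_subset fun α hα => Order.lt_add_one_iff.mpr (hbdd α hα)
  rw [hX, Cardinal.mk_Iio_ordinal, Cardinal.lift_le] at hle
  exact hle.not_gt (Cardinal.lt_ord.mp ((Cardinal.isSuccLimit_ord hμ).succ_lt hβ))

section CoherentUnion

variable {X : Set Ordinal} {C : Ordinal → Set Ordinal}

lemma iUnion_inter_Iio_of_coherent (hsub : ∀ α ∈ X, C α ⊆ Iio α)
    (hcoh : ∀ α ∈ X, ∀ β ∈ X, α < β → C α = C β ∩ Iio α) {α : Ordinal} (hα : α ∈ X) :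
    (⋃ β ∈ X, C β) ∩ Iio α = C α := by
  refine Subset.antisymm ?_ fun x hx => ⟨mem_biUnion hα hx, hsub α hα hx⟩
  rintro x ⟨hx, hxα⟩
  obtain ⟨γ, hγ, hxγ⟩ := mem_iUnion₂.mp hx
  rcases lt_trichotomy γ α with h | rfl | h
  · exact (hcoh γ hγ α hα h ▸ hxγ).1
  · exact hxγ
  · exact hcoh α hα γ hγ h ▸ ⟨hxγ, hxα⟩

lemma iUnion_inter_Iio_of_coherent_of_le (hsub : ∀ α ∈ X, C α ⊆ Iio α)
    (hcoh : ∀ α ∈ X, ∀ β ∈ X, α < β → C α = C β ∩ Iio α) {α β : Ordinal} (hα : α ∈ X)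
    (hβα : β ≤ α) : (⋃ γ ∈ X, C γ) ∩ Iio β = C α ∩ Iio β := by
  rw [← iUnion_inter_Iio_of_coherent hsub hcoh hα, inter_assoc, Iio_inter_Iio,
    min_eq_right hβα]

lemma isClubIn_iUnion_of_coherent {θ : Ordinal} (hXθ : X ⊆ Iio θ)
    (hunb : ∀ β < θ, ∃ α ∈ X, β < α) (hclub : ∀ α ∈ X, IsClubIn (C α) α)
    (hcoh : ∀ α ∈ X, ∀ β ∈ X, α < β → C α = C β ∩ Iio α) :
    IsClubIn (⋃ α ∈ X, C α) θ := by
  have hsub : ∀ α ∈ X, C α ⊆ Iio α := fun α hα => (hclub α hα).1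
  refine ⟨iUnion₂_subset fun α hα x hx => mem_Iio.2 ((hsub α hα hx).trans (hXθ hα)),
    fun β hβ => ?_, ?_⟩
  · obtain ⟨α, hα, hβα⟩ := hunb β hβ
    obtain ⟨γ, hγ, hβγ⟩ := (hclub α hα).2.1 β hβα
    exact ⟨γ, mem_biUnion hα hγ, hβγ⟩
  · rintro β ⟨hβacc, hβθ⟩
    obtain ⟨α, hα, hβα⟩ := hunb β hβθ
    have hβaccα : β ∈ accPts (C α) :=
      mem_accPts_of_inter_Iio_eq (iUnion_inter_Iio_of_coherent_of_le hsub hcoh hα hβα.le) hβacc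
    exact mem_biUnion hα ((hclub α hα).2.2 ⟨hβaccα, hβα⟩)

end CoherentUnion

namespace IsIndexedSquareSeq

variable {μ lam : Cardinal.{0}} {iidx : Ordinal → Ordinal} {C : Ordinal → Ordinal → Set Ordinal}
  {α β i : Ordinal}

lemma isClubIn (hseq : IsIndexedSquareSeq μ lam iidx C) (hα : α < μ.ord ∧ Order.IsSuccLimit α)
    (hi : iidx α ≤ i) (hilam : i < lam.ord) : IsClubIn (C α i) α :=
  hseq.2.1 α hα.1 hα.2 i hi hilam

lemma coherent (hseq : IsIndexedSquareSeq μ lam iidx C) (hαβ : α < β)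
    (hβ : β < μ.ord ∧ Order.IsSuccLimit β) (hi : iidx β ≤ i) (hilam : i < lam.ord)
    (hacc : α ∈ accPts (C β i)) : iidx α ≤ i ∧ C α i = C β i ∩ Iio α :=
  hseq.2.2.2.1 α β hαβ hβ.1 (isSuccLimit_of_mem_accPts hacc) hβ.2 i hi hilam hacc

lemma iidx_le_of_pairColor_lt (hseq : IsIndexedSquareSeq μ lam iidx C)
    {c : Ordinal → Ordinal → Ordinal} (hc : IsLeastIndexColoring μ iidx C c)
    (hilam : i < lam.ord) (hα : α < μ.ord ∧ Order.IsSuccLimit α)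
    (hβ : β < μ.ord ∧ Order.IsSuccLimit β) (hne : α ≠ β) (hcol : pairColor c α β < i) :
    iidx β ≤ i := by
  rcases hne.lt_or_gt with hlt | hgt
  · rw [pairColor_of_lt hlt] at hcol
    exact (hc α β hlt hβ.1 hα.2 hβ.2).1.trans hcol.le
  · rw [pairColor_comm, pairColor_of_lt hgt] at hcol
    obtain ⟨hidx, hmem, -⟩ := hc β α hgt hα.1 hβ.2 hα.2
    have hmono : C α (c β α) ⊆ C α i := hseq.2.2.1 α hα.1 hα.2 _ i hidx hcol.le hilam
    exact (hseq.coherent hgt hα (hidx.trans hcol.le) hilam (accPts_mono hmono hmem)).1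

end IsIndexedSquareSeq

theorem stmt14_general (μ lam : Cardinal.{0}) (hμ : μ.IsRegular)
    (iidx : Ordinal → Ordinal) (C : Ordinal → Ordinal → Set Ordinal)
    (hseq : IsIndexedSquareSeq μ lam iidx C)
    (c : Ordinal → Ordinal → Ordinal) (hc : IsLeastIndexColoring μ iidx C c)
    (i : Ordinal) (hi : i < lam.ord) (Λ : Set Ordinal) (hΛ : Λ ⊆ Set.Iio i)
    (X : Set Ordinal) (hX : X ⊆ {α | α < μ.ord ∧ Order.IsSuccLimit α})
    (hXsize : #X = Cardinal.lift.{1} μ)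
    (hwc : WellConnectedIn {α | α < μ.ord ∧ Order.IsSuccLimit α} c Λ X)
    (hacc : ∀ α ∈ X, ∀ β ∈ X, α < β → α ∈ accPts (C β i)) :
    IsClubIn (⋃ α ∈ X, C α i) μ.ord ∧
      ∀ α ∈ accPts (⋃ α ∈ X, C α i), α < μ.ord →
        (⋃ α ∈ X, C α i) ∩ Set.Iio α = C α i := by
  have hXinf : X.Infinite := by
    rw [← Set.infinite_coe_iff, Cardinal.infinite_iff, hXsize, ← Cardinal.lift_aleph0.{1, 0},
      Cardinal.lift_le]
    exact hμ.aleph0_le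
  have hidx : ∀ β ∈ X, iidx β ≤ i := fun β hβ => by
    obtain ⟨α, hα, hαβ⟩ := hXinf.nontrivial.exists_ne β
    obtain ⟨γ, hγ, hγβ, hcol⟩ := hwc.exists_edge hα hβ hαβ
    exact hseq.iidx_le_of_pairColor_lt hc hi hγ (hX hβ) hγβ (hΛ hcol)
  have hclub : ∀ α ∈ X, IsClubIn (C α i) α := fun α hα => hseq.isClubIn (hX hα) (hidx α hα) hi
  have hcoh : ∀ α ∈ X, ∀ β ∈ X, α < β → C α i = C β i ∩ Iio α := fun α hα β hβ hαβ =>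
    (hseq.coherent hαβ (hX hβ) (hidx β hβ) hi (hacc α hα β hβ hαβ)).2
  have hunb : ∀ β < μ.ord, ∃ α ∈ X, β < α := fun β hβ =>
    exists_gt_of_mk_eq hμ.aleph0_le hXsize hβ
  refine ⟨isClubIn_iUnion_of_coherent (fun α hα => (hX hα).1) hunb hclub hcoh,
    fun β hβacc hβμ => ?_⟩
  obtain ⟨α, hα, hβα⟩ := hunb β hβμ
  have hD := iUnion_inter_Iio_of_coherent_of_le (fun α hα => (hclub α hα).1) hcoh hα hβα.le
  rw [hD, (hseq.coherent hβα (hX hα) (hidx α hα) hi (mem_accPts_of_inter_Iio_eq hD hβacc)).2]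

/-- Given a `□^{ind}(μ,λ)`-sequence, its derived coloring `c`, a color `i < λ`,
`Λ ⊆ i`, and `X ⊆ acc(μ)` of size `μ` that is well-connected in `Λ` and satisfies
`α ∈ acc(C β i)` for all `α < β` in `X`, the set `D = ⋃_{α ∈ X} C α i` is a club
in `μ` with `D ∩ α = C α i` for every `α ∈ acc(D)` (which contradicts clause (6)
of the definition of a `□^{ind}(μ,λ)`-sequence). -/
theorem stmt14 (μ lam : Cardinal.{0}) (hlam : lam.IsRegular) (hμ : μ.IsRegular)
    (hlamμ : lam < μ)
    (iidx : Ordinal → Ordinal) (C : Ordinal → Ordinal → Set Ordinal)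
    (hseq : IsIndexedSquareSeq μ lam iidx C)
    (c : Ordinal → Ordinal → Ordinal) (hc : IsLeastIndexColoring μ iidx C c)
    (i : Ordinal) (hi : i < lam.ord) (Λ : Set Ordinal) (hΛ : Λ ⊆ Set.Iio i)
    (X : Set Ordinal) (hX : X ⊆ {α | α < μ.ord ∧ Order.IsSuccLimit α})
    (hXsize : #X = Cardinal.lift.{1} μ)
    (hwc : WellConnectedIn {α | α < μ.ord ∧ Order.IsSuccLimit α} c Λ X)
    (hacc : ∀ α ∈ X, ∀ β ∈ X, α < β → α ∈ accPts (C β i)) :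
    IsClubIn (⋃ α ∈ X, C α i) μ.ord ∧
      ∀ α ∈ accPts (⋃ α ∈ X, C α i), α < μ.ord →
        (⋃ α ∈ X, C α i) ∩ Set.Iio α = C α i :=
  stmt14_general μ lam hμ iidx C hseq c hc i hi Λ hΛ X hX hXsize hwc hacc
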